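/- arXiv:2507.03856 — 4 statements merged into one kernel-verified Lean document; each statement's English description precedes it below -/
import Mathlib

section
/- Let B be a real matrix with columns b_1, ..., b_n each of unit Euclidean norm, and let μ(B) = max_{i≠j} |b_i^T b_j| be its mutual coherence. Suppose c = B q_* where q_* ∈ ℝ^n satisfies ‖q_*‖_0 < (1/2)(1 + 1/μ(B)), where ‖·‖_0 counts the number of nonzero entries. Then q_* is the unique solution of the problem: minimize ‖q‖_0 subject to B q = c; that is, every q ∈ ℝ^n with B q = c and q ≠ q_* satisfies ‖q‖_0 > ‖q_*‖_0. -/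
/-- Mutual coherence of a matrix `B` (whose columns are assumed unit-norm):
the supremum of `|b_i^T b_j|` over pairs of distinct columns. -/
noncomputable def mutualCoherence {d n : ℕ} (B : Matrix (Fin d) (Fin n) ℝ) : ℝ :=
  sSup {x : ℝ | ∃ i j : Fin n, i ≠ j ∧ x = |∑ k, B k i * B k j|}

/-- `‖q‖₀`: the number of nonzero entries of `q`. -/
noncomputable def l0norm {n : ℕ} (q : Fin n → ℝ) : ℕ :=
  (Finset.univ.filter fun i => q i ≠ 0).card

/-!
If `B q = B q*` with `q ≠ q*`, then `h = q - q*` is a nonzero vector of the kernel of `B`.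
Row `i` of `Bᵀ B h = 0` reads `h i = -∑_{j ≠ i} ⟨b_i, b_j⟩ h j`, so `(1 + μ) |h i| ≤ μ ‖h‖₁`;
summing over the support of `h` gives `1 + μ ≤ μ ‖h‖₀`. Since `‖h‖₀ ≤ ‖q‖₀ + ‖q*‖₀`, a competitor
with `‖q‖₀ ≤ ‖q*‖₀` would force `1 + μ ≤ 2 μ ‖q*‖₀`, contradicting `‖q*‖₀ < (1 + 1/μ) / 2`.
-/

open Finset

namespace Matrix

variable {d n : ℕ} (B : Matrix (Fin d) (Fin n) ℝ)

theorem mutualCoherence_nonneg : 0 ≤ mutualCoherence B :=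
  Real.sSup_nonneg fun _ ⟨_, _, _, hx⟩ => hx ▸ abs_nonneg _

theorem abs_sum_mul_le_mutualCoherence {i j : Fin n} (hij : i ≠ j) :
    |∑ k, B k i * B k j| ≤ mutualCoherence B := by
  have hfinite : {x : ℝ | ∃ i j : Fin n, i ≠ j ∧ x = |∑ k, B k i * B k j|}.Finite :=
    (Set.finite_range fun p : Fin n × Fin n => |∑ k, B k p.1 * B k p.2|).subset
      fun _ ⟨a, b, _, hx⟩ => ⟨(a, b), hx.symm⟩
  exact le_csSup hfinite.bddAbove ⟨i, j, hij, rfl⟩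

theorem sum_gram_mul_eq_zero {h : Fin n → ℝ} (hBh : B *ᵥ h = 0) (i : Fin n) :
    ∑ j, (∑ k, B k i * B k j) * h j = 0 := by
  have hgram : (Bᵀ * B) *ᵥ h = 0 := by rw [← mulVec_mulVec, hBh, mulVec_zero]
  simpa [mulVec, dotProduct, mul_apply] using congrFun hgram i

theorem one_add_mutualCoherence_mul_abs_le (hunit : ∀ j : Fin n, ∑ k, (B k j) ^ 2 = 1)
    {h : Fin n → ℝ} (hBh : B *ᵥ h = 0) (i : Fin n) :
    (1 + mutualCoherence B) * |h i| ≤ mutualCoherence B * ∑ j, |h j| := by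
  set μ := mutualCoherence B
  have hrow := sum_gram_mul_eq_zero B hBh i
  rw [← add_sum_erase _ _ (mem_univ i)] at hrow
  simp only [← sq, hunit, one_mul] at hrow
  have hoff : |h i| ≤ μ * ∑ j ∈ univ.erase i, |h j| := by
    rw [eq_neg_of_add_eq_zero_left hrow, abs_neg, mul_sum]
    refine (abs_sum_le_sum_abs _ _).trans <| sum_le_sum fun j hj => ?_
    rw [abs_mul]
    exact mul_le_mul_of_nonneg_right
      (abs_sum_mul_le_mutualCoherence B (ne_of_mem_erase hj).symm) (abs_nonneg _)
  rw [← add_sum_erase univ (fun j => |h j|) (mem_univ i), mul_add]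
  linarith

theorem one_add_mutualCoherence_le_mul_l0norm (hunit : ∀ j : Fin n, ∑ k, (B k j) ^ 2 = 1)
    {h : Fin n → ℝ} (hBh : B *ᵥ h = 0) (hh : h ≠ 0) :
    1 + mutualCoherence B ≤ mutualCoherence B * l0norm h := by
  set μ := mutualCoherence B
  set S := univ.filter fun i => h i ≠ 0
  have hnorm_pos : 0 < ∑ j, |h j| := by
    obtain ⟨i, hi⟩ := Function.ne_iff.mp hh
    exact sum_pos' (fun j _ => abs_nonneg _) ⟨i, mem_univ i, abs_pos.mpr hi⟩
  have hsupport : ∑ i ∈ S, |h i| = ∑ i, |h i| :=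
    sum_subset (subset_univ S) fun i _ hi => by simpa [S] using hi
  have hsum : (1 + μ) * ∑ i, |h i| ≤ μ * S.card * ∑ i, |h i| := by
    calc (1 + μ) * ∑ i, |h i| = ∑ i ∈ S, (1 + μ) * |h i| := by rw [← mul_sum, hsupport]
      _ ≤ ∑ _i ∈ S, μ * ∑ j, |h j| :=
        sum_le_sum fun i _ => one_add_mutualCoherence_mul_abs_le B hunit hBh i
      _ = μ * S.card * ∑ i, |h i| := by rw [sum_const, nsmul_eq_mul]; ring
  exact le_of_mul_le_mul_right hsum hnorm_pos

end Matrix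

theorem l0norm_sub_le {n : ℕ} (q p : Fin n → ℝ) : l0norm (q - p) ≤ l0norm q + l0norm p := by
  unfold l0norm
  refine (card_le_card fun i hi => ?_).trans (card_union_le _ _)
  simp only [mem_union, mem_filter, mem_univ, true_and, Pi.sub_apply] at hi ⊢
  by_contra! hqp
  exact hi (by rw [hqp.1, hqp.2, sub_zero])

theorem l0_unique_recovery {d n : ℕ} (B : Matrix (Fin d) (Fin n) ℝ)
    (hunit : ∀ j : Fin n, ∑ k, (B k j) ^ 2 = 1)
    (qstar : Fin n → ℝ)
    (hsparse : (l0norm qstar : ℝ) < (1 / 2) * (1 + 1 / mutualCoherence B)) :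
    ∀ q : Fin n → ℝ, B.mulVec q = B.mulVec qstar → q ≠ qstar →
      l0norm qstar < l0norm q := by
  intro q hq hne
  set μ := mutualCoherence B
  have hspark : 1 + μ ≤ μ * l0norm (q - qstar) :=
    B.one_add_mutualCoherence_le_mul_l0norm hunit
      (by rw [Matrix.mulVec_sub, hq, sub_self]) (sub_ne_zero.mpr hne)
  have hμ : 0 ≤ μ := B.mutualCoherence_nonneg
  have hsparse' : μ * (2 * l0norm qstar) < 1 + μ := by
    rcases hμ.eq_or_lt with hμ0 | hμpos
    · rw [← hμ0]; norm_num
    · calc μ * (2 * l0norm qstar) < μ * (1 + 1 / μ) := by nlinarith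
        _ = 1 + μ := by field_simp; ring
  by_contra! hle
  have hsub : (l0norm (q - qstar) : ℝ) ≤ 2 * l0norm qstar := by
    exact_mod_cast (l0norm_sub_le q qstar).trans (by omega)
  exact lt_irrefl _ <| calc
    1 + μ ≤ μ * l0norm (q - qstar) := hspark
    _ ≤ μ * (2 * l0norm qstar) := by gcongr
    _ < 1 + μ := hsparse'
end

section
/- Let s ≤ t be positive integers. A matrix G_* ∈ ℝ^{s×t} of full row rank s minimizes the objective F(G) = (1/2)‖G^T G − I_t‖_F² over all matrices G ∈ ℝ^{s×t} of full row rank if and only if G_* = U V^T for some orthogonal matrix U ∈ ℝ^{s×s} and some matrix V ∈ ℝ^{t×s} with orthonormal columns. -/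
open Matrix

/-- The objective `F(G) = (1/2) ‖Gᵀ G − I‖_F²`. -/
noncomputable def frobObjective {s t : ℕ} (G : Matrix (Fin s) (Fin t) ℝ) : ℝ :=
  (1 / 2) * ∑ i : Fin t, ∑ j : Fin t, ((Gᵀ * G - 1 : Matrix (Fin t) (Fin t) ℝ) i j) ^ 2

/-! Since `tr((GᵀG)²) = tr((GGᵀ)²)` and `tr(GᵀG) = tr(GGᵀ)`, expanding the squares gives
`F(G) = F(Gᵀ) + (t - s)/2`, where `F(Gᵀ) = (1/2) ‖GGᵀ − I_s‖_F² ≥ 0`. Hence `(t - s)/2` is a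
lower bound for `F`, attained exactly when `GGᵀ = I_s`, i.e. when `G = U Vᵀ`; and it is attained
by a full-rank matrix, e.g. the first `s` rows of `I_t`. -/

theorem Matrix.IsSymm.trace_sq_eq_sum_sq {n R : Type*} [Fintype n] [DecidableEq n]
    [CommSemiring R] {M : Matrix n n R} (hM : M.IsSymm) : trace (M ^ 2) = ∑ i, ∑ j, M i j ^ 2 := by
  simp only [trace, diag_apply, sq, mul_apply]
  exact Finset.sum_congr rfl fun i _ => Finset.sum_congr rfl fun j _ => by rw [hM.apply i j]

theorem Matrix.sum_sum_sq_eq_zero_iff {m n R : Type*} [Fintype m] [Fintype n] [Ring R]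
    [LinearOrder R] [IsStrictOrderedRing R] (M : Matrix m n R) :
    ∑ i, ∑ j, M i j ^ 2 = 0 ↔ M = 0 := by
  rw [Finset.sum_eq_zero_iff_of_nonneg fun i _ => Finset.sum_nonneg fun j _ => sq_nonneg (M i j),
    ← Matrix.ext_iff]
  refine forall_congr' fun i => ?_
  rw [Finset.sum_eq_zero_iff_of_nonneg fun j _ => sq_nonneg (M i j)]
  simp

theorem Matrix.trace_sq_transpose_mul_sub_one_add_card {m n R : Type*} [Fintype m] [Fintype n]
    [DecidableEq m] [DecidableEq n] [CommRing R] (G : Matrix m n R) :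
    trace ((Gᵀ * G - 1) ^ 2) + (Fintype.card m : R) =
      trace ((G * Gᵀ - 1) ^ 2) + (Fintype.card n : R) := by
  have h_sq : trace ((Gᵀ * G) * (Gᵀ * G)) = trace ((G * Gᵀ) * (G * Gᵀ)) := by
    rw [Matrix.mul_assoc Gᵀ, trace_mul_comm Gᵀ]
    simp only [Matrix.mul_assoc]
  have h_lin : trace (Gᵀ * G) = trace (G * Gᵀ) := trace_mul_comm _ _
  simp only [sq, Matrix.sub_mul, Matrix.mul_sub, Matrix.mul_one, Matrix.one_mul, trace_sub,
    trace_one, h_sq, h_lin]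
  ring

theorem frobObjective_eq_half_trace_sq {s t : ℕ} (G : Matrix (Fin s) (Fin t) ℝ) :
    frobObjective G = (1 / 2) * trace ((Gᵀ * G - 1) ^ 2) := by
  have h_symm : (Gᵀ * G - 1 : Matrix (Fin t) (Fin t) ℝ).IsSymm :=
    IsSymm.sub (by rw [IsSymm, transpose_mul, transpose_transpose]) isSymm_one
  rw [h_symm.trace_sq_eq_sum_sq, frobObjective]

theorem frobObjective_eq_frobObjective_transpose_add {s t : ℕ} (G : Matrix (Fin s) (Fin t) ℝ) :
    frobObjective G = frobObjective Gᵀ + ((t : ℝ) - s) / 2 := by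
  have h := trace_sq_transpose_mul_sub_one_add_card G
  simp only [Fintype.card_fin] at h
  rw [frobObjective_eq_half_trace_sq, frobObjective_eq_half_trace_sq, transpose_transpose]
  linarith

theorem frobObjective_nonneg {s t : ℕ} (G : Matrix (Fin s) (Fin t) ℝ) : 0 ≤ frobObjective G := by
  unfold frobObjective
  positivity

theorem frobObjective_eq_zero_iff {s t : ℕ} (G : Matrix (Fin s) (Fin t) ℝ) :
    frobObjective G = 0 ↔ Gᵀ * G = 1 := by
  rw [frobObjective, mul_eq_zero, or_iff_right (by norm_num), sum_sum_sq_eq_zero_iff, sub_eq_zero]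

theorem sub_div_two_le_frobObjective {s t : ℕ} (G : Matrix (Fin s) (Fin t) ℝ) :
    ((t : ℝ) - s) / 2 ≤ frobObjective G := by
  rw [frobObjective_eq_frobObjective_transpose_add]
  linarith [frobObjective_nonneg Gᵀ]

theorem frobObjective_eq_sub_div_two_iff {s t : ℕ} (G : Matrix (Fin s) (Fin t) ℝ) :
    frobObjective G = ((t : ℝ) - s) / 2 ↔ G * Gᵀ = 1 := by
  rw [frobObjective_eq_frobObjective_transpose_add, add_eq_right, frobObjective_eq_zero_iff,
    transpose_transpose]

theorem Matrix.exists_mul_transpose_eq_one {s t : ℕ} {R : Type*} [CommSemiring R] (hst : s ≤ t) :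
    ∃ G : Matrix (Fin s) (Fin t) R, G * Gᵀ = 1 := by
  refine ⟨(1 : Matrix (Fin t) (Fin t) R).submatrix (Fin.castLE hst) id, ?_⟩
  rw [transpose_submatrix, transpose_one, ← Equiv.coe_refl, submatrix_mul_equiv, one_mul]
  ext i j
  simp [one_apply, Fin.castLE_inj]

theorem Matrix.rank_eq_card_of_mul_transpose_eq_one {m n : Type*} [Fintype m] [Fintype n]
    [DecidableEq m] {G : Matrix m n ℝ} (hG : G * Gᵀ = 1) : G.rank = Fintype.card m := by
  rw [← rank_self_mul_transpose, hG, rank_one]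

theorem Matrix.exists_orthogonal_mul_transpose_iff {m n R : Type*} [Fintype m] [Fintype n]
    [DecidableEq m] [CommRing R] (G : Matrix m n R) :
    (∃ (U : Matrix m m R) (V : Matrix n m R), Uᵀ * U = 1 ∧ Vᵀ * V = 1 ∧ G = U * Vᵀ) ↔
      G * Gᵀ = 1 := by
  constructor
  · rintro ⟨U, V, hU, hV, rfl⟩
    calc U * Vᵀ * (U * Vᵀ)ᵀ = U * (Vᵀ * V) * Uᵀ := by simp only [transpose_mul,
          transpose_transpose, Matrix.mul_assoc]
      _ = 1 := by rw [hV, Matrix.mul_one, mul_eq_one_comm.mp hU]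
  · intro hG
    exact ⟨1, Gᵀ, by simp, by rwa [transpose_transpose], by simp⟩

theorem coherence_minimizer_characterization_general {s t : ℕ} (hst : s ≤ t)
    (Gstar : Matrix (Fin s) (Fin t) ℝ) :
    (∀ G : Matrix (Fin s) (Fin t) ℝ, G.rank = s → frobObjective Gstar ≤ frobObjective G)
      ↔
    ∃ (U : Matrix (Fin s) (Fin s) ℝ) (V : Matrix (Fin t) (Fin s) ℝ),
      Uᵀ * U = 1 ∧ Vᵀ * V = 1 ∧ Gstar = U * Vᵀ := by
  rw [exists_orthogonal_mul_transpose_iff, ← frobObjective_eq_sub_div_two_iff]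
  constructor
  · intro hmin
    obtain ⟨G₀, hG₀⟩ := exists_mul_transpose_eq_one (R := ℝ) hst
    have hG₀_rank : G₀.rank = s := by
      rw [rank_eq_card_of_mul_transpose_eq_one hG₀, Fintype.card_fin]
    have hG₀_opt := (frobObjective_eq_sub_div_two_iff G₀).2 hG₀
    exact le_antisymm (hG₀_opt ▸ hmin G₀ hG₀_rank) (sub_div_two_le_frobObjective Gstar)
  · intro hG G _
    exact hG ▸ sub_div_two_le_frobObjective G

theorem coherence_minimizer_characterization {s t : ℕ} (hs : 0 < s) (hst : s ≤ t)
    (Gstar : Matrix (Fin s) (Fin t) ℝ) (hGstar : Gstar.rank = s) :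
    (∀ G : Matrix (Fin s) (Fin t) ℝ, G.rank = s → frobObjective Gstar ≤ frobObjective G)
      ↔
    ∃ (U : Matrix (Fin s) (Fin s) ℝ) (V : Matrix (Fin t) (Fin s) ℝ),
      Uᵀ * U = 1 ∧ Vᵀ * V = 1 ∧ Gstar = U * Vᵀ :=
  coherence_minimizer_characterization_general hst Gstar
end

section
/- Let s ≤ t be positive integers. For every matrix G ∈ ℝ^{s×t}, one has ‖G^T G − I_t‖_F² ≥ t − s. -/
/-!
Both `‖GᵀG - I_t‖²` and `‖GGᵀ - I_s‖²` expand, through `‖X‖² = tr (X Xᵀ)`, to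
`tr ((GᵀG)²) - 2 tr (GᵀG) + (size of the identity)`, and the first two terms are unchanged
when `GᵀG` is replaced by `GGᵀ` (cyclicity of the trace). Hence
`‖GᵀG - I_t‖² = ‖GGᵀ - I_s‖² + t - s ≥ t - s`.
-/

open Matrix

namespace Matrix

variable {m n R : Type*} [Fintype m] [Fintype n]

theorem sum_sq_entries_eq_trace_mul_transpose [CommSemiring R] (X : Matrix m n R) :
    ∑ i, ∑ j, X i j ^ 2 = trace (X * Xᵀ) := by
  simp only [trace, diag, mul_apply, transpose_apply, sq]

variable [DecidableEq m] [DecidableEq n] [CommRing R]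

theorem trace_sub_one_mul_transpose (X : Matrix n n R) :
    trace ((X - 1) * (X - 1)ᵀ) = trace (X * Xᵀ) - 2 * trace X + Fintype.card n := by
  simp only [transpose_sub, transpose_one, sub_mul, mul_sub, mul_one, one_mul, trace_sub,
    trace_one, trace_transpose]
  ring

theorem sum_sq_transpose_mul_self_sub_one_add_card (A : Matrix m n R) :
    ∑ i, ∑ j, (Aᵀ * A - 1 : Matrix n n R) i j ^ 2 + Fintype.card m
      = ∑ i, ∑ j, (A * Aᵀ - 1 : Matrix m m R) i j ^ 2 + Fintype.card n := by
  have h_trace_sq : trace (Aᵀ * A * (Aᵀ * A)ᵀ) = trace (A * Aᵀ * (A * Aᵀ)ᵀ) := by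
    simpa only [transpose_mul, transpose_transpose, Matrix.mul_assoc] using
      trace_mul_comm Aᵀ (A * (Aᵀ * A))
  have h_trace : trace (Aᵀ * A) = trace (A * Aᵀ) := trace_mul_comm Aᵀ A
  simp only [sum_sq_entries_eq_trace_mul_transpose, trace_sub_one_mul_transpose, h_trace_sq, h_trace]
  ring

end Matrix

theorem frobenius_lower_bound_general {s t : ℕ}
    (G : Matrix (Fin s) (Fin t) ℝ) :
    (t : ℝ) - s ≤ ∑ i : Fin t, ∑ j : Fin t, ((Gᵀ * G - 1 : Matrix (Fin t) (Fin t) ℝ) i j) ^ 2 := by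
  have h_identity := sum_sq_transpose_mul_self_sub_one_add_card G
  have h_nonneg : 0 ≤ ∑ k, ∑ l, (G * Gᵀ - 1 : Matrix (Fin s) (Fin s) ℝ) k l ^ 2 := by positivity
  simp only [Fintype.card_fin] at h_identity
  linarith

theorem frobenius_lower_bound {s t : ℕ} (hs : 0 < s) (hst : s ≤ t)
    (G : Matrix (Fin s) (Fin t) ℝ) :
    (t : ℝ) - s ≤ ∑ i : Fin t, ∑ j : Fin t, ((Gᵀ * G - 1 : Matrix (Fin t) (Fin t) ℝ) i j) ^ 2 :=
  frobenius_lower_bound_general G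
end

section
/- Let s ≤ t be positive integers and G ∈ ℝ^{s×t}. Then ‖G^T G − I_t‖_F² = t − s if and only if G G^T = I_s, i.e., if and only if the rows of G are orthonormal. -/
/-!
Writing squared Frobenius norms as traces, `‖GᵀG - I_t‖² = tr (GᵀG)² - 2 tr (GᵀG) + t`, and by
cyclicity of the trace `tr (GᵀG)² = tr (GGᵀ)²` and `tr (GᵀG) = tr (GGᵀ)`. Hence
`‖GᵀG - I_t‖² = ‖GGᵀ - I_s‖² + (t - s)`, and equality with `t - s` holds iff `GGᵀ = I_s`.
-/

open Matrix

namespace Matrix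

variable {m n R : Type*} [Fintype m] [Fintype n]

theorem sum_sq_apply_eq_trace_mul_transpose [CommSemiring R] (A : Matrix m n R) :
    ∑ i, ∑ j, A i j ^ 2 = trace (A * Aᵀ) := by
  simp only [trace, diag, mul_apply, transpose_apply, sq]

theorem sum_sq_apply_eq_zero_iff [Ring R] [LinearOrder R] [IsStrictOrderedRing R]
    (A : Matrix m n R) : ∑ i, ∑ j, A i j ^ 2 = 0 ↔ A = 0 := by
  have hrow (i : m) : ∑ j, A i j ^ 2 = 0 ↔ ∀ j, A i j = 0 := by
    simp only [Fintype.sum_eq_zero_iff_of_nonneg fun j => sq_nonneg (A i j), funext_iff,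
      Pi.zero_apply, pow_eq_zero_iff two_ne_zero]
  rw [Fintype.sum_eq_zero_iff_of_nonneg fun i => Finset.sum_nonneg fun j _ => sq_nonneg (A i j)]
  simp only [funext_iff, Pi.zero_apply, hrow, ← Matrix.ext_iff, zero_apply]

variable [DecidableEq m] [DecidableEq n] [CommRing R]

theorem sum_sq_transpose_mul_self_sub_one (G : Matrix m n R) :
    ∑ i, ∑ j, (Gᵀ * G - 1 : Matrix n n R) i j ^ 2
      = ∑ i, ∑ j, (G * Gᵀ - 1 : Matrix m m R) i j ^ 2 + (Fintype.card n - Fintype.card m) := by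
  have hcycle : trace (Gᵀ * G * (Gᵀ * G)) = trace (G * Gᵀ * (G * Gᵀ)) := by
    rw [Matrix.mul_assoc, trace_mul_comm]
    simp only [Matrix.mul_assoc]
  simp only [sum_sq_apply_eq_trace_mul_transpose, transpose_sub, transpose_mul,
    transpose_transpose, transpose_one, sub_mul, mul_sub, Matrix.mul_one, Matrix.one_mul,
    trace_sub, trace_one, hcycle, trace_mul_comm Gᵀ G]
  ring

end Matrix

theorem frobenius_lower_bound_equality_iff_general {s t : ℕ}
    (G : Matrix (Fin s) (Fin t) ℝ) :
    ∑ i : Fin t, ∑ j : Fin t, ((Gᵀ * G - 1 : Matrix (Fin t) (Fin t) ℝ) i j) ^ 2 = (t : ℝ) - s ↔ G * Gᵀ = 1 := by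
  rw [sum_sq_transpose_mul_self_sub_one, Fintype.card_fin, Fintype.card_fin, add_eq_right,
    sum_sq_apply_eq_zero_iff, sub_eq_zero]

theorem frobenius_lower_bound_equality_iff {s t : ℕ} (hs : 0 < s) (hst : s ≤ t)
    (G : Matrix (Fin s) (Fin t) ℝ) :
    ∑ i : Fin t, ∑ j : Fin t, ((Gᵀ * G - 1 : Matrix (Fin t) (Fin t) ℝ) i j) ^ 2 = (t : ℝ) - s ↔ G * Gᵀ = 1 :=
  frobenius_lower_bound_equality_iff_general G
end
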